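/- An ideal I of a finitely generated k-algebra A is special (equal to its equiradical) if and only if: for every polynomial D over k with no rational zero in k, every tuple ā and element b in A, and all m,n ∈ ℕ, b^m·D#(ā, bⁿ) ∈ I implies b ∈ I, where D# is the homogenization of D. -/

import Mathlib

/-!
Maximal ideals with residue field `k` are the kernels of the `k`-points `A →ₐ[k] k`, so `b` lies
in the equiradical of `I` iff every `k`-point vanishing on `I` vanishes at `b`. At a point with
`b ↦ β ≠ 0` we have `D#(ā, βⁿ) = βⁿᵈ·D(ā/βⁿ) ≠ 0`, which gives one direction.

Conversely, if `b` is in the equiradical then the finitely generated algebra `(A/I)[1/b]` has no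
`k`-points, so in a presentation `k[X̄]/J` of it the ideal `J` has no zero in `kᴺ`. If `k` is
algebraically closed, the Nullstellensatz gives `1 ∈ J`. Otherwise the homogenization `q(x, y)` of
a polynomial without roots vanishes only at `(0, 0)`, and folding a finite generating set of `J`
with `q` yields a single `D ∈ J` without zeros in `kᴺ`. Clearing the denominators `bⁿ` in the
relation `D(ḡ) = 0` in `(A/I)[1/b]` gives `b^m·D#(ā, bⁿ) ∈ I`, hence `b ∈ I`.
-/

open MvPolynomial

variable (k : Type) [Field k] (A : Type) [CommRing A] [Algebra k A]

/-- `homogEval D b c` is the evaluation `D#(b, c)` in `A` of the homogenization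
`D#(X̄,Y) = Y^{deg D}·D(X̄/Y)` of `D` at the tuple `b` and the element `c`. -/
noncomputable def homogEval {m : ℕ} (D : MvPolynomial (Fin m) k) (b : Fin m → A) (c : A) :
    A :=
  ∑ s ∈ D.support, algebraMap k A (D.coeff s) * (∏ i, b i ^ s i) *
    c ^ (D.totalDegree - s.sum fun _ e => e)

theorem Polynomial.eval_homogenize_natDegree_of_eq_zero {R : Type*} [CommSemiring R]
    (p : Polynomial R) {x : Fin 2 → R} (hx : x 1 = 0) :
    MvPolynomial.eval x (p.homogenize p.natDegree) = p.leadingCoeff * x 0 ^ p.natDegree := by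
  rw [Polynomial.homogenize, map_sum, Finset.Nat.sum_antidiagonal_eq_sum_range_succ_mk,
    Finset.sum_range_succ, Finset.sum_eq_zero, zero_add]
  · simp [MvPolynomial.eval_monomial, Finsupp.prod_fintype, Fin.prod_univ_two]
  · intro i hi
    have : p.natDegree - i ≠ 0 := by simp at hi; omega
    simp [MvPolynomial.eval_monomial, Finsupp.prod_fintype, Fin.prod_univ_two, hx, this]

theorem MvPolynomial.aeval_mem_of_constantCoeff_eq_zero {σ R S : Type*} [CommSemiring R]
    [CommRing S] [Algebra R S] {q : MvPolynomial σ R} (hq : constantCoeff q = 0)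
    {J : Ideal S} {v : σ → S} (hv : ∀ i, v i ∈ J) : aeval v q ∈ J := by
  rw [← Ideal.Quotient.eq_zero_iff_mem, ← Ideal.Quotient.mkₐ_eq_mk R, comp_aeval_apply]
  have : (fun i => Ideal.Quotient.mkₐ R J (v i)) = 0 := by
    ext i
    exact Ideal.Quotient.eq_zero_iff_mem.mpr (hv i)
  rw [this, aeval_zero, hq, map_zero]

section Points

variable {k}

theorem exists_eval_eq_zero_iff_eq_zero_of_not_isAlgClosed (hk : ¬IsAlgClosed k) :
    ∃ q : MvPolynomial (Fin 2) k, ∀ x, eval x q = 0 ↔ x = 0 := by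
  obtain ⟨p, hmon, hirr, hroot⟩ :
      ∃ p : Polynomial k, p.Monic ∧ Irreducible p ∧ ∀ x, p.eval x ≠ 0 := by
    by_contra! h
    exact hk (IsAlgClosed.of_exists_root k h)
  have hdeg : p.natDegree ≠ 0 :=
    (Polynomial.natDegree_pos_iff_degree_pos.mpr (Polynomial.degree_pos_of_irreducible hirr)).ne'
  refine ⟨p.homogenize p.natDegree, fun x => ⟨fun hx => ?_, ?_⟩⟩
  · by_cases hx1 : x 1 = 0
    · rw [p.eval_homogenize_natDegree_of_eq_zero hx1, hmon.leadingCoeff, one_mul,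
        pow_eq_zero_iff hdeg] at hx
      ext i
      fin_cases i <;> simp [hx, hx1]
    · rw [Polynomial.eval_homogenize le_rfl x hx1] at hx
      exact absurd hx (mul_ne_zero (hroot _) (pow_ne_zero _ hx1))
  · rintro rfl
    rw [p.eval_homogenize_natDegree_of_eq_zero (x := 0) rfl]
    simp [hdeg]

theorem exists_mem_forall_algHom_of_apply_eq_zero {R : Type*} [CommRing R] [Algebra k R]
    {q : MvPolynomial (Fin 2) k} (hq : ∀ x, eval x q = 0 ↔ x = 0) (J : Ideal R)
    (s : Finset R) (hs : ↑s ⊆ (J : Set R)) :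
    ∃ f ∈ J, ∀ φ : R →ₐ[k] k, φ f = 0 → ∀ g ∈ s, φ g = 0 := by
  classical
  induction s using Finset.induction_on with
  | empty => exact ⟨0, J.zero_mem, by simp⟩
  | insert g s _ ih =>
    rw [Finset.coe_insert, Set.insert_subset_iff] at hs
    obtain ⟨f, hfJ, hf⟩ := ih hs.2
    have hq0 : constantCoeff q = 0 := by simpa [eval_zero] using (hq 0).mpr rfl
    refine ⟨aeval ![g, f] q, aeval_mem_of_constantCoeff_eq_zero hq0 ?_, fun φ hφ => ?_⟩
    · intro i
      fin_cases i
      exacts [hs.1, hfJ]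
    rw [comp_aeval_apply, aeval_eq_eval, hq] at hφ
    have hφg : φ g = 0 := congr_fun hφ 0
    have hφf : φ f = 0 := congr_fun hφ 1
    simpa [hφg] using hf φ hφf

theorem exists_mem_forall_eval_ne_zero {σ : Type*} [Finite σ] {J : Ideal (MvPolynomial σ k)}
    (hJ : ∀ x : σ → k, ∃ f ∈ J, eval x f ≠ 0) : ∃ D ∈ J, ∀ x, eval x D ≠ 0 := by
  by_cases hk : IsAlgClosed k
  · have hempty : zeroLocus k J = ∅ := by
      ext x
      simpa using hJ x
    have htop : J = ⊤ := by
      rw [← Ideal.radical_eq_top, ← vanishingIdeal_zeroLocus_eq_radical (K := k), hempty,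
        vanishingIdeal_empty]
    exact ⟨1, htop ▸ Submodule.mem_top, fun x => by simp⟩
  · obtain ⟨q, hq⟩ := exists_eval_eq_zero_iff_eq_zero_of_not_isAlgClosed hk
    obtain ⟨s, hs⟩ : J.FG := IsNoetherian.noetherian J
    obtain ⟨D, hDJ, hD⟩ :=
      exists_mem_forall_algHom_of_apply_eq_zero hq J s (hs ▸ Ideal.subset_span)
    refine ⟨D, hDJ, fun x hx => ?_⟩
    obtain ⟨f, hfJ, hfx⟩ := hJ x
    have hle : J ≤ RingHom.ker (eval x) :=
      hs ▸ Ideal.span_le.mpr fun g hg => hD (aeval x) hx g hg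
    exact hfx (hle hfJ)

theorem exists_aeval_eq_zero_forall_eval_ne_zero {B : Type*} [CommRing B] [Algebra k B]
    [Algebra.FiniteType k B] (hB : IsEmpty (B →ₐ[k] k)) :
    ∃ (N : ℕ) (g : Fin N → B) (D : MvPolynomial (Fin N) k),
      aeval g D = 0 ∧ ∀ x, eval x D ≠ 0 := by
  obtain ⟨N, χ, hχ⟩ := Algebra.FiniteType.iff_quotient_mvPolynomial''.mp ‹_›
  obtain ⟨D, hDJ, hD⟩ := exists_mem_forall_eval_ne_zero (J := RingHom.ker χ) fun x => by
    by_contra! h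
    exact hB.false (χ.liftOfSurjective hχ (aeval x) fun f hf => h f hf)
  exact ⟨N, χ ∘ X, D, by rw [← aeval_unique, ← RingHom.mem_ker]; exact hDJ, hD⟩

theorem isEmpty_algHom_localizationAway {R : Type*} [CommRing R] [Algebra k R] {s : R}
    (hs : ∀ φ : R →ₐ[k] k, φ s = 0) : IsEmpty (Localization.Away s →ₐ[k] k) :=
  ⟨fun ψ => ((IsLocalization.Away.algebraMap_isUnit s).map ψ).ne_zero
    (hs (ψ.comp (IsScalarTower.toAlgHom k R _)))⟩

end Points

section HomogEval

variable {k A} {m : ℕ}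

theorem map_homogEval {B : Type} [CommRing B] [Algebra k B] (φ : A →ₐ[k] B)
    (D : MvPolynomial (Fin m) k) (a : Fin m → A) (c : A) :
    φ (homogEval k A D a c) = homogEval k B D (φ ∘ a) (φ c) := by
  simp [homogEval, map_sum, map_prod]

theorem homogEval_eq_pow_mul_aeval (D : MvPolynomial (Fin m) k) (a : Fin m → A) {c u : A}
    (h : c * u = 1) :
    homogEval k A D a c = c ^ D.totalDegree * aeval (fun i => a i * u) D := by
  rw [aeval_def, eval₂_eq', Finset.mul_sum]
  refine Finset.sum_congr rfl fun s hs => ?_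
  obtain ⟨e, he⟩ := Nat.exists_eq_add_of_le (le_totalDegree hs)
  have hprod : ∏ i, (a i * u) ^ s i = (∏ i, a i ^ s i) * u ^ (s.sum fun _ e => e) := by
    rw [Finsupp.sum_fintype _ _ fun _ => rfl, ← Finset.prod_pow_eq_pow_sum,
      ← Finset.prod_mul_distrib]
    simp only [mul_pow]
  have hcu : (c * u) ^ (s.sum fun _ e => e) = 1 := by rw [h, one_pow]
  rw [hprod, he, Nat.add_sub_cancel_left, pow_add]
  linear_combination -(algebraMap k A (D.coeff s) * (∏ i, a i ^ s i) * c ^ e) * hcu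

theorem homogEval_ne_zero {D : MvPolynomial (Fin m) k} (hD : ∀ v, eval v D ≠ 0)
    (a : Fin m → k) {c : k} (hc : c ≠ 0) : homogEval k k D a c ≠ 0 := by
  rw [homogEval_eq_pow_mul_aeval D a (mul_inv_cancel₀ hc), aeval_eq_eval]
  exact mul_ne_zero (pow_ne_zero _ hc) (hD _)

theorem exists_pow_mul_homogEval_eq_zero (s : A) {g : Fin m → Localization.Away s}
    {D : MvPolynomial (Fin m) k} (hD : aeval g D = 0) :
    ∃ (a : Fin m → A) (i n : ℕ), s ^ i * homogEval k A D a (s ^ n) = 0 := by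
  obtain ⟨⟨_, n, rfl⟩, hn⟩ :=
    IsLocalization.exist_integer_multiples_of_finite (Submonoid.powers s) g
  choose a ha using hn
  simp only at ha
  have hu :
      algebraMap A (Localization.Away s) (s ^ n) * IsLocalization.Away.invSelf s ^ n = 1 := by
    rw [map_pow, ← mul_pow, IsLocalization.Away.mul_invSelf, one_pow]
  have hg : (fun i => (algebraMap A _ ∘ a) i * IsLocalization.Away.invSelf s ^ n) = g :=
    funext fun i => by
      rw [Function.comp_apply, ha i, Algebra.smul_def, mul_right_comm, hu, one_mul]
  have : algebraMap A (Localization.Away s) (homogEval k A D a (s ^ n)) = 0 := by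
    rw [← IsScalarTower.coe_toAlgHom' k, map_homogEval, IsScalarTower.coe_toAlgHom',
      homogEval_eq_pow_mul_aeval _ _ hu, hg, hD, mul_zero]
  obtain ⟨⟨_, i, rfl⟩, hi⟩ := (IsLocalization.map_eq_zero_iff (Submonoid.powers s) _ _).mp this
  exact ⟨a, i, n, hi⟩

end HomogEval

section Equiradical

variable {A}

def equiradical (I : Ideal A) : Ideal A :=
  sInf {m : Ideal A | I ≤ m ∧ m.IsMaximal ∧ Function.Bijective (algebraMap k (A ⧸ m))}

variable {k}

theorem le_equiradical (I : Ideal A) : I ≤ equiradical k I :=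
  le_sInf fun _ hm => hm.1

theorem mem_equiradical_iff {I : Ideal A} {z : A} :
    z ∈ equiradical k I ↔ ∀ φ : A →ₐ[k] k, I ≤ RingHom.ker φ → φ z = 0 := by
  constructor
  · intro hz φ hI
    have hφ : Function.Surjective φ := fun r => ⟨algebraMap k A r, φ.commutes r⟩
    have hmax : (RingHom.ker φ).IsMaximal := RingHom.ker_isMaximal_of_surjective φ hφ
    refine Submodule.mem_sInf.mp hz _ ⟨hI, hmax, RingHom.injective _, fun y => ?_⟩
    obtain ⟨w, rfl⟩ := Ideal.Quotient.mk_surjective y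
    refine ⟨φ w, ?_⟩
    rw [← Ideal.Quotient.mk_algebraMap, Ideal.Quotient.eq, RingHom.mem_ker, map_sub,
      φ.commutes, Algebra.algebraMap_self_apply, sub_self]
  · refine fun h => Submodule.mem_sInf.mpr ?_
    rintro m ⟨hIm, -, hbij⟩
    let φ : A →ₐ[k] k := (AlgEquiv.ofBijective (Algebra.ofId k (A ⧸ m)) hbij).symm.toAlgHom.comp
      (Ideal.Quotient.mkₐ k m)
    have hφ : ∀ x, φ x = 0 ↔ x ∈ m := fun x => by
      simp [φ, Ideal.Quotient.eq_zero_iff_mem]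
    exact (hφ z).mp (h φ fun x hx => (hφ x).mpr (hIm hx))

theorem mem_equiradical_of_pow_mul_homogEval_mem {I : Ideal A} {mv : ℕ}
    {D : MvPolynomial (Fin mv) k} (hD : ∀ v, eval v D ≠ 0) {a : Fin mv → A} {b : A} {m n : ℕ}
    (h : b ^ m * homogEval k A D a (b ^ n) ∈ I) : b ∈ equiradical k I := by
  refine mem_equiradical_iff.mpr fun φ hφ => ?_
  by_contra hb
  have := hφ h
  rw [RingHom.mem_ker, map_mul, map_pow, map_homogEval, map_pow] at this
  exact mul_ne_zero (pow_ne_zero m hb) (homogEval_ne_zero hD _ (pow_ne_zero n hb)) this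

theorem mem_of_mem_equiradical [Algebra.FiniteType k A] {I : Ideal A}
    (hI : ∀ (mv : ℕ) (D : MvPolynomial (Fin mv) k) (a : Fin mv → A) (b : A) (m n : ℕ),
      (∀ v : Fin mv → k, eval v D ≠ 0) → b ^ m * homogEval k A D a (b ^ n) ∈ I → b ∈ I)
    {z : A} (hz : z ∈ equiradical k I) : z ∈ I := by
  have hpoints : ∀ φ : A ⧸ I →ₐ[k] k, φ (Ideal.Quotient.mk I z) = 0 := fun φ =>
    mem_equiradical_iff.mp hz (φ.comp (Ideal.Quotient.mkₐ k I)) fun x hx => by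
      simp [Ideal.Quotient.eq_zero_iff_mem.mpr hx]
  have : Algebra.FiniteType k (A ⧸ I) :=
    .of_surjective (Ideal.Quotient.mkₐ k I) Ideal.Quotient.mk_surjective
  obtain ⟨N, g, D, hgD, hD⟩ :=
    exists_aeval_eq_zero_forall_eval_ne_zero (isEmpty_algHom_localizationAway hpoints)
  obtain ⟨a, m, n, h⟩ := exists_pow_mul_homogEval_eq_zero _ hgD
  obtain ⟨a, rfl⟩ := (Ideal.Quotient.mkₐ_surjective k I).comp_left a
  refine hI N D a z m n hD (Ideal.Quotient.eq_zero_iff_mem.mp ?_)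
  rwa [map_mul, map_pow, ← Ideal.Quotient.mkₐ_eq_mk k, map_homogEval, map_pow]

end Equiradical

/-- An ideal `I` of a finitely generated `k`-algebra `A` is special (equal to its
equiradical, the intersection of all maximal ideals `m ⊇ I` with `A/m ≅ k`) if and only if:
for every polynomial `D` over `k` with no rational zero in `k`, every tuple `ā` and element
`b` of `A` and all `m, n ∈ ℕ`, `b^m·D#(ā, bⁿ) ∈ I` implies `b ∈ I`. -/
theorem special_ideal_iff_homog_condition (hfg : Algebra.FiniteType k A) (I : Ideal A) :
    I = sInf {m : Ideal A | I ≤ m ∧ m.IsMaximal ∧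
        Function.Bijective (algebraMap k (A ⧸ m))} ↔
      ∀ (mv : ℕ) (D : MvPolynomial (Fin mv) k) (a : Fin mv → A) (b : A) (m n : ℕ),
        (∀ v : Fin mv → k, eval v D ≠ 0) →
        b ^ m * homogEval k A D a (b ^ n) ∈ I → b ∈ I := by
  change I = equiradical k I ↔ _
  refine ⟨fun hI _ _ _ _ _ _ hD h => hI ▸ mem_equiradical_of_pow_mul_homogEval_mem hD h,
    fun hI => le_antisymm (le_equiradical I) fun _ hz => mem_of_mem_equiradical hI hz⟩
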